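/- arXiv:1003.1332 — 3 statements merged into one kernel-verified Lean document; each statement's English description precedes it below -/
import Mathlib

section
/- (Severi–Guareschi) Let A ⊆ ℝᵐ, x̂ ∈ A an accumulation point of A, f : A → ℝᵏ, and L : ℝᵐ → ℝᵏ linear. Then f is differentiable at x̂ with differential L if and only if f is continuous at x̂ and the upper tangent cone of graph(f) at (x̂, f(x̂)) is contained in graph(L). -/
open Filter Metric Topology

/-- Upper tangent cone (sequential description) in a normed space. -/
def upperTangentCone {E : Type*} [NormedAddCommGroup E] [NormedSpace ℝ E]
    (S : Set E) (p : E) : Set E :=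
  {w | ∃ (lam : ℕ → ℝ) (u : ℕ → E),
      (∀ k, 0 < lam k) ∧ Filter.Tendsto lam Filter.atTop (𝓝 0) ∧
      (∀ k, u k ∈ S) ∧ Filter.Tendsto u Filter.atTop (𝓝 p) ∧
      Filter.Tendsto (fun k => (lam k)⁻¹ • (u k - p)) Filter.atTop (𝓝 w)}

/-!
The limit condition is `HasFDerivWithinAt f L A x`: the remainder vanishes at `x`, so removing
`x` from `A` changes nothing. If `L` is the derivative, every tangent direction of the graph is a
limit of rescaled chords `(y - x, f y - f x)`, and `L` maps the first components of these chords
asymptotically onto the second ones. Conversely, if the remainder is not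
`o(‖y - x‖)`, there are `ε > 0` and points `yₙ → x` of `A` with remainder at least `ε ‖yₙ - x‖`;
by continuity the graph points `(yₙ, f yₙ)` tend to `(x, f x)`, and compactness of the unit sphere
of `E × F` yields a unit tangent direction `w` with `ε ‖w.1‖ ≤ ‖w.2 - L w.1‖`, which cannot lie in
the graph of `L`.
-/

theorem exists_norm_eq_one_mem_upperTangentCone_inter {G : Type*} [NormedAddCommGroup G]
    [NormedSpace ℝ G] [ProperSpace G] {S C : Set G} {p : G} (hC : IsClosed C) {u : ℕ → G}
    (huS : ∀ n, u n ∈ S) (hup : ∀ n, u n ≠ p) (hlim : Tendsto u atTop (𝓝 p))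
    (huC : ∀ n, ‖u n - p‖⁻¹ • (u n - p) ∈ C) :
    ∃ w ∈ upperTangentCone S p ∩ C, ‖w‖ = 1 := by
  have hK : ∀ n, ‖u n - p‖⁻¹ • (u n - p) ∈ sphere (0 : G) 1 ∩ C := fun n =>
    ⟨by simp [norm_smul, sub_ne_zero.2 (hup n)], huC n⟩
  obtain ⟨w, ⟨hw, hwC⟩, ψ, hψ, hψw⟩ :=
    ((isCompact_sphere 0 1).inter_right hC).tendsto_subseq hK
  have huψ : Tendsto (u ∘ ψ) atTop (𝓝 p) := hlim.comp hψ.tendsto_atTop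
  refine ⟨w, ⟨⟨fun n => ‖u (ψ n) - p‖, u ∘ ψ, fun n => norm_pos_iff.2 (sub_ne_zero.2 (hup _)),
    ?_, fun n => huS _, huψ, hψw⟩, hwC⟩, by simpa using hw⟩
  simpa using (huψ.sub_const p).norm

section Graph

variable {E F : Type*} [NormedAddCommGroup E] [NormedSpace ℝ E] [NormedAddCommGroup F]
  [NormedSpace ℝ F] {A : Set E} {f : E → F} {x : E} {L : E →L[ℝ] F}

theorem tendsto_remainder_nhdsWithin_diff_iff_hasFDerivWithinAt :
    Tendsto (fun y => ‖y - x‖⁻¹ • (f y - f x - L (y - x))) (𝓝[A \ {x}] x) (𝓝 0) ↔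
      HasFDerivWithinAt f L A x := by
  rw [← hasFDerivWithinAt_sdiff_singleton_self, hasFDerivWithinAt_iff_tendsto,
    tendsto_zero_iff_norm_tendsto_zero]
  simp only [norm_smul, norm_inv, norm_norm]

theorem HasFDerivWithinAt.upperTangentCone_graph_subset (h : HasFDerivWithinAt f L A x) :
    upperTangentCone {p : E × F | p.1 ∈ A ∧ p.2 = f p.1} (x, f x) ⊆ {p | p.2 = L p.1} := by
  rintro w ⟨lam, u, -, -, hu, hux, hw⟩
  have hw₁ : Tendsto (fun n => (lam n)⁻¹ • ((u n).1 - x)) atTop (𝓝 w.1) :=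
    (continuous_fst.tendsto w).comp hw
  have hw₂ : Tendsto (fun n => (lam n)⁻¹ • ((u n).2 - f x)) atTop (𝓝 w.2) :=
    (continuous_snd.tendsto w).comp hw
  have hd : Tendsto (fun n => (u n).1 - x) atTop (𝓝 0) := by
    simpa using ((continuous_fst.tendsto _).comp hux).sub_const x
  have hLw := h.lim hd (Eventually.of_forall fun n => by simpa using (hu n).1) hw₁
  exact tendsto_nhds_unique (hw₂.congr fun n => by simp [(hu n).2]) hLw

theorem exists_mem_upperTangentCone_graph_of_not_hasFDerivWithinAt [ProperSpace E]
    [ProperSpace F] (hf : ContinuousWithinAt f A x) (h : ¬HasFDerivWithinAt f L A x) :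
    ∃ ε > 0, ∃ w ∈ upperTangentCone {p : E × F | p.1 ∈ A ∧ p.2 = f p.1} (x, f x),
      ‖w‖ = 1 ∧ ε * ‖w.1‖ ≤ ‖w.2 - L w.1‖ := by
  rw [hasFDerivWithinAt_iff_isLittleO, Asymptotics.isLittleO_iff] at h
  push Not at h
  obtain ⟨ε, hε, hbad⟩ := h
  obtain ⟨z, hz, hz_bad⟩ := frequently_iff_seq_forall.1
    (Eventually.and_frequently self_mem_nhdsWithin hbad)
  have hzx : ∀ n, z n ≠ x := fun n hn => (hz_bad n).2.not_ge (by simp [hn])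
  -- A closed cone: it contains the normalized chords, hence their limit direction.
  set C : Set (E × F) := {v | ε * ‖v.1‖ ≤ ‖v.2 - L v.1‖}
  have hC : IsClosed C := isClosed_le (by fun_prop) (by fun_prop)
  have hzC : ∀ n, ‖(z n, f (z n)) - (x, f x)‖⁻¹ • ((z n, f (z n)) - (x, f x)) ∈ C := fun n => by
    have hc : 0 ≤ ‖(z n, f (z n)) - (x, f x)‖⁻¹ := by positivity
    simp only [C, Set.mem_ofPred_eq, Prod.smul_fst, Prod.smul_snd, Prod.fst_sub, Prod.snd_sub,
      map_smul, ← smul_sub, norm_smul, Real.norm_of_nonneg hc, mul_left_comm ε]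
    exact mul_le_mul_of_nonneg_left (hz_bad n).2.le hc
  have hlim : Tendsto (fun n => (z n, f (z n))) atTop (𝓝 (x, f x)) :=
    (tendsto_nhds_of_tendsto_nhdsWithin hz).prodMk_nhds (hf.tendsto.comp hz)
  obtain ⟨w, ⟨hw_cone, hwC⟩, hw⟩ := exists_norm_eq_one_mem_upperTangentCone_inter hC
    (S := {p : E × F | p.1 ∈ A ∧ p.2 = f p.1}) (u := fun n => (z n, f (z n)))
    (fun n => ⟨(hz_bad n).1, rfl⟩)
    (fun n hn => hzx n (congrArg Prod.fst hn)) hlim hzC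
  exact ⟨ε, hε, w, hw_cone, hw, hwC⟩

theorem hasFDerivWithinAt_of_upperTangentCone_graph_subset [ProperSpace E] [ProperSpace F]
    (hf : ContinuousWithinAt f A x)
    (hcone : upperTangentCone {p : E × F | p.1 ∈ A ∧ p.2 = f p.1} (x, f x) ⊆ {p | p.2 = L p.1}) :
    HasFDerivWithinAt f L A x := by
  by_contra h
  obtain ⟨ε, hε, w, hw_cone, hw, hwε⟩ :=
    exists_mem_upperTangentCone_graph_of_not_hasFDerivWithinAt hf h
  have hwL : w.2 = L w.1 := hcone hw_cone
  rw [hwL, sub_self, norm_zero] at hwε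
  have hw₁ : w.1 = 0 := norm_le_zero_iff.1 (nonpos_of_mul_nonpos_right hwε hε)
  have hw₀ : w = 0 := Prod.ext hw₁ (by simp [hwL, hw₁])
  simp [hw₀] at hw

end Graph

theorem severi_guareschi_differentiability_general {m k : ℕ}
    (A : Set (EuclideanSpace ℝ (Fin m)))
    (f : EuclideanSpace ℝ (Fin m) → EuclideanSpace ℝ (Fin k))
    (x : EuclideanSpace ℝ (Fin m))
    (L : EuclideanSpace ℝ (Fin m) →ₗ[ℝ] EuclideanSpace ℝ (Fin k)) :
    Filter.Tendsto (fun y => ‖y - x‖⁻¹ • (f y - f x - L (y - x)))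
        (𝓝[A \ {x}] x) (𝓝 0) ↔
      ContinuousWithinAt f A x ∧
      upperTangentCone {p : EuclideanSpace ℝ (Fin m) × EuclideanSpace ℝ (Fin k) |
          p.1 ∈ A ∧ p.2 = f p.1} (x, f x)
        ⊆ {p : EuclideanSpace ℝ (Fin m) × EuclideanSpace ℝ (Fin k) | p.2 = L p.1} := by
  exact (tendsto_remainder_nhdsWithin_diff_iff_hasFDerivWithinAt
    (L := LinearMap.toContinuousLinearMap L)).trans
    ⟨fun h => ⟨h.continuousWithinAt, h.upperTangentCone_graph_subset⟩,
      fun h => hasFDerivWithinAt_of_upperTangentCone_graph_subset h.1 h.2⟩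

/-- Severi–Guareschi: `f` is differentiable at `x̂` (relative to `A`) with differential `L`
iff `f` is continuous at `x̂` relative to `A` and the upper tangent cone of the graph of `f`
at `(x̂, f x̂)` is contained in the graph of `L`. -/
theorem severi_guareschi_differentiability {m k : ℕ}
    (A : Set (EuclideanSpace ℝ (Fin m)))
    (f : EuclideanSpace ℝ (Fin m) → EuclideanSpace ℝ (Fin k))
    (x : EuclideanSpace ℝ (Fin m)) (hxA : x ∈ A) (hacc : AccPt x (Filter.principal A))
    (L : EuclideanSpace ℝ (Fin m) →ₗ[ℝ] EuclideanSpace ℝ (Fin k)) :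
    Filter.Tendsto (fun y => ‖y - x‖⁻¹ • (f y - f x - L (y - x)))
        (𝓝[A \ {x}] x) (𝓝 0) ↔
      ContinuousWithinAt f A x ∧
      upperTangentCone {p : EuclideanSpace ℝ (Fin m) × EuclideanSpace ℝ (Fin k) |
          p.1 ∈ A ∧ p.2 = f p.1} (x, f x)
        ⊆ {p : EuclideanSpace ℝ (Fin m) × EuclideanSpace ℝ (Fin k) | p.2 = L p.1} :=
  severi_guareschi_differentiability_general A f x L
end

section
/- (Guareschi) Let A ⊆ ℝⁿ, x̂ ∈ A an accumulation point of A, and f : A → ℝ continuous at x̂. Then f is differentiable at x̂ (i.e., admits some total differential) if and only if the upper tangent cone of graph(f) at (x̂, f(x̂)) is contained in some hyperplane of ℝⁿ × ℝ containing no vertical line (no line parallel to the factor ℝ). -/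
open Filter Metric Topology

/-- Guareschi: a function continuous at `x̂` is differentiable at `x̂` iff the upper tangent
cone of its graph is contained in some hyperplane without vertical lines. -/
theorem guareschi_differentiability {n : ℕ}
    (A : Set (EuclideanSpace ℝ (Fin n)))
    (f : EuclideanSpace ℝ (Fin n) → ℝ)
    (x : EuclideanSpace ℝ (Fin n)) (hxA : x ∈ A) (hacc : AccPt x (Filter.principal A))
    (hcont : ContinuousWithinAt f A x) :
    (∃ L : EuclideanSpace ℝ (Fin n) →ₗ[ℝ] ℝ,
        Filter.Tendsto (fun y => ‖y - x‖⁻¹ * (f y - f x - L (y - x)))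
          (𝓝[A \ {x}] x) (𝓝 0)) ↔
      ∃ H : Submodule ℝ (EuclideanSpace ℝ (Fin n) × ℝ),
        (∃ φ : (EuclideanSpace ℝ (Fin n) × ℝ) →ₗ[ℝ] ℝ, φ ≠ 0 ∧ H = LinearMap.ker φ) ∧
        (∀ t : ℝ, ((0 : EuclideanSpace ℝ (Fin n)), t) ∈ H → t = 0) ∧
        upperTangentCone {p : EuclideanSpace ℝ (Fin n) × ℝ | p.1 ∈ A ∧ p.2 = f p.1}
            (x, f x) ⊆ (H : Set (EuclideanSpace ℝ (Fin n) × ℝ)) := by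
  constructor
  · rintro ⟨L, hL⟩
    set φ : (EuclideanSpace ℝ (Fin n) × ℝ) →ₗ[ℝ] ℝ :=
      LinearMap.snd ℝ (EuclideanSpace ℝ (Fin n)) ℝ
        - L.comp (LinearMap.fst ℝ (EuclideanSpace ℝ (Fin n)) ℝ) with hφdef
    have hφ01 : φ ((0 : EuclideanSpace ℝ (Fin n)), (1 : ℝ)) = 1 := by
      simp [hφdef]
    refine ⟨LinearMap.ker φ, ⟨φ, ?_, rfl⟩, ?_, ?_⟩
    · intro h
      rw [h] at hφ01
      simp at hφ01
    · intro t ht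
      have : φ ((0 : EuclideanSpace ℝ (Fin n)), t) = 0 := ht
      simpa [hφdef] using this
    · rintro w ⟨lam, u, hpos, hlam0, hmem, hu, hw⟩
      have hLc : Continuous L := L.continuous_of_finiteDimensional
      -- first coordinates
      have hy : Tendsto (fun k => (u k).1) atTop (𝓝 x) :=
        (continuous_fst.tendsto _).comp hu
      have h1 : Tendsto (fun k => (lam k)⁻¹ • ((u k).1 - x)) atTop (𝓝 w.1) :=
        (continuous_fst.tendsto w).comp hw
      have h2 : Tendsto (fun k => (lam k)⁻¹ * ((u k).2 - f x)) atTop (𝓝 w.2) :=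
        (continuous_snd.tendsto w).comp hw
      have hLw1 : Tendsto (fun k => (lam k)⁻¹ * L ((u k).1 - x)) atTop (𝓝 (L w.1)) := by
        have h := (hLc.tendsto w.1).comp h1
        refine h.congr (fun k => ?_)
        show L ((lam k)⁻¹ • ((u k).1 - x)) = (lam k)⁻¹ * L ((u k).1 - x)
        rw [map_smul, smul_eq_mul]
      -- the rescaled error
      have hg : Tendsto (fun k => (lam k)⁻¹ * (f ((u k).1) - f x - L ((u k).1 - x)))
          atTop (𝓝 (w.2 - L w.1)) := by
        have := h2.sub hLw1
        refine this.congr (fun k => ?_)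
        have h2k : (u k).2 = f ((u k).1) := (hmem k).2
        rw [h2k]; ring
      -- the error also tends to 0
      have hh : Tendsto (fun k => ‖(u k).1 - x‖⁻¹ * (f ((u k).1) - f x - L ((u k).1 - x)))
          atTop (𝓝 0) := by
        rw [Metric.tendsto_atTop]
        intro ε hε
        rw [Metric.tendsto_nhdsWithin_nhds] at hL
        obtain ⟨δ, hδpos, hδ⟩ := hL ε hε
        obtain ⟨N, hN⟩ := Metric.tendsto_atTop.1 hy δ hδpos
        refine ⟨N, fun k hk => ?_⟩
        by_cases hne : (u k).1 = x
        · simp [hne, hε]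
        · exact hδ ⟨(hmem k).1, hne⟩ (hN k hk)
      have hnorm : Tendsto (fun k => ‖(lam k)⁻¹ • ((u k).1 - x)‖) atTop (𝓝 ‖w.1‖) :=
        (continuous_norm.tendsto w.1).comp h1
      have hg0 : Tendsto (fun k => (lam k)⁻¹ * (f ((u k).1) - f x - L ((u k).1 - x)))
          atTop (𝓝 0) := by
        have := hnorm.mul hh
        rw [mul_zero] at this
        refine this.congr (fun k => ?_)
        by_cases hne : (u k).1 = x
        · simp [hne]
        · have hnz : ‖(u k).1 - x‖ ≠ 0 := by
            simpa [sub_eq_zero] using hne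
          rw [norm_smul, Real.norm_eq_abs, abs_of_pos (inv_pos.2 (hpos k)),
            mul_assoc, ← mul_assoc ‖(u k).1 - x‖, mul_inv_cancel₀ hnz, one_mul]
      have hkey : w.2 - L w.1 = 0 := tendsto_nhds_unique hg hg0
      show φ w = 0
      simpa [hφdef] using hkey
  · rintro ⟨H, ⟨φ, hφne, rfl⟩, hvert, hcone⟩
    set ψ : EuclideanSpace ℝ (Fin n) →ₗ[ℝ] ℝ :=
      φ.comp (LinearMap.inl ℝ (EuclideanSpace ℝ (Fin n)) ℝ) with hψdef
    set c : ℝ := φ ((0 : EuclideanSpace ℝ (Fin n)), (1 : ℝ)) with hcdef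
    have hc : c ≠ 0 := by
      intro h
      have h1 : ((0 : EuclideanSpace ℝ (Fin n)), (1 : ℝ)) ∈ LinearMap.ker φ := h
      exact one_ne_zero (hvert 1 h1)
    have hφ_eq : ∀ (v : EuclideanSpace ℝ (Fin n)) (t : ℝ), φ (v, t) = ψ v + t * c := by
      intro v t
      have hsplit : (v, t) = ((v, (0:ℝ)) + ((0 : EuclideanSpace ℝ (Fin n)), t)) := by
        simp
      rw [hsplit, map_add]
      congr 1
      have : ((0 : EuclideanSpace ℝ (Fin n)), t) =
          t • ((0 : EuclideanSpace ℝ (Fin n)), (1:ℝ)) := by simp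
      rw [this, map_smul, smul_eq_mul, hcdef]
    set L : EuclideanSpace ℝ (Fin n) →ₗ[ℝ] ℝ := (-c⁻¹) • ψ with hLdef
    have hLc : Continuous L := L.continuous_of_finiteDimensional
    have hker_iff : ∀ (v : EuclideanSpace ℝ (Fin n)) (t : ℝ),
        φ (v, t) = 0 → t = L v := by
      intro v t hvt
      rw [hφ_eq] at hvt
      rw [hLdef]
      simp only [LinearMap.smul_apply, smul_eq_mul]
      field_simp
      linarith [hvt]
    refine ⟨L, ?_⟩
    by_contra hnot
    rw [Filter.tendsto_iff_seq_tendsto] at hnot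
    push_neg at hnot
    obtain ⟨y, hyto, hgnot⟩ := hnot
    -- extract ε and a subsequence with error ≥ ε
    rw [Metric.tendsto_atTop] at hgnot
    push_neg at hgnot
    obtain ⟨ε, hεpos, hfreq⟩ := hgnot
    -- hfreq : ∀ N, ∃ k ≥ N, ε ≤ dist (g (y k)) 0
    have hfreq' : ∃ᶠ k in atTop,
        ε ≤ |‖y k - x‖⁻¹ * (f (y k) - f x - L (y k - x))| := by
      rw [Filter.frequently_atTop]
      intro N
      obtain ⟨k, hk, hke⟩ := hfreq N
      exact ⟨k, hk, by rwa [Real.dist_eq, sub_zero] at hke⟩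
    obtain ⟨σ, hσmono, hσ⟩ := Filter.extraction_of_frequently_atTop hfreq'
    have hyσ : Tendsto (fun k => y (σ k)) atTop (𝓝[A \ {x}] x) :=
      hyto.comp hσmono.tendsto_atTop
    -- eventually in A \ {x}; shift the sequence
    have hev : ∀ᶠ k in atTop, y (σ k) ∈ A \ {x} :=
      (tendsto_nhdsWithin_iff.1 hyσ).2
    obtain ⟨N, hN⟩ := Filter.eventually_atTop.1 hev
    set z : ℕ → EuclideanSpace ℝ (Fin n) := fun k => y (σ (k + N)) with hzdef
    have hzA : ∀ k, z k ∈ A := fun k => (hN (k + N) le_add_self).1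
    have hzne : ∀ k, z k ≠ x := fun k => (hN (k + N) le_add_self).2
    have hzx : Tendsto z atTop (𝓝 x) :=
      ((tendsto_nhdsWithin_iff.1 hyσ).1).comp (tendsto_add_atTop_nat N)
    have hzerr : ∀ k, ε ≤ |‖z k - x‖⁻¹ * (f (z k) - f x - L (z k - x))| :=
      fun k => hσ (k + N)
    have hfz : Tendsto (fun k => f (z k)) atTop (𝓝 (f x)) := by
      refine hcont.tendsto.comp ?_
      exact tendsto_nhdsWithin_iff.2 ⟨hzx, Eventually.of_forall hzA⟩
    set lam : ℕ → ℝ := fun k => ‖z k - x‖ + |f (z k) - f x| with hlamdef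
    have hlampos : ∀ k, 0 < lam k := fun k =>
      add_pos_of_pos_of_nonneg (norm_pos_iff.2 (sub_ne_zero.2 (hzne k))) (abs_nonneg _)
    have hlam0 : Tendsto lam atTop (𝓝 0) := by
      have h1 : Tendsto (fun k => ‖z k - x‖) atTop (𝓝 0) := by
        have := (hzx.sub_const x).norm
        simpa using this
      have h2 : Tendsto (fun k => |f (z k) - f x|) atTop (𝓝 0) := by
        have := (hfz.sub_const (f x)).abs
        simpa using this
      simpa using h1.add h2
    set uu : ℕ → EuclideanSpace ℝ (Fin n) × ℝ := fun k => (z k, f (z k)) with huudef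
    set wseq : ℕ → EuclideanSpace ℝ (Fin n) × ℝ :=
      fun k => (lam k)⁻¹ • (uu k - (x, f x)) with hwseqdef
    have hnormid : ∀ k, ‖uu k - (x, f x)‖ = max ‖z k - x‖ |f (z k) - f x| := by
      intro k
      rw [Prod.norm_def]
      simp [huudef, Real.norm_eq_abs]
    have hwnorm : ∀ k, ‖wseq k‖ = (lam k)⁻¹ * max ‖z k - x‖ |f (z k) - f x| := by
      intro k
      rw [hwseqdef]
      rw [norm_smul, Real.norm_eq_abs, abs_of_pos (inv_pos.2 (hlampos k)), hnormid]
    have hwball : ∀ k, wseq k ∈ Metric.closedBall (0 : EuclideanSpace ℝ (Fin n) × ℝ) 1 := by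
      intro k
      rw [Metric.mem_closedBall, dist_zero_right, hwnorm]
      rw [inv_mul_le_iff₀ (hlampos k), mul_one]
      exact max_le (le_add_of_nonneg_right (abs_nonneg _))
        (le_add_of_nonneg_left (norm_nonneg _))
    have hwhalf : ∀ k, (1 : ℝ) / 2 ≤ ‖wseq k‖ := by
      intro k
      rw [hwnorm, le_inv_mul_iff₀ (hlampos k)]
      have h2s : lam k ≤ 2 * max ‖z k - x‖ |f (z k) - f x| := by
        rw [two_mul]
        exact add_le_add (le_max_left _ _) (le_max_right _ _)
      calc lam k * (1/2) ≤ (2 * max ‖z k - x‖ |f (z k) - f x|) * (1/2) :=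
            mul_le_mul_of_nonneg_right h2s (by norm_num)
        _ = max ‖z k - x‖ |f (z k) - f x| := by ring
    obtain ⟨w, hwmem, τ, hτmono, hwlim⟩ :=
      (isCompact_closedBall (0 : EuclideanSpace ℝ (Fin n) × ℝ) 1).tendsto_subseq hwball
    have hwcone : w ∈ upperTangentCone
        {p : EuclideanSpace ℝ (Fin n) × ℝ | p.1 ∈ A ∧ p.2 = f p.1} (x, f x) := by
      refine ⟨fun k => lam (τ k), fun k => uu (τ k), fun k => hlampos _,
        hlam0.comp hτmono.tendsto_atTop, fun k => ⟨hzA _, rfl⟩, ?_, hwlim⟩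
      exact (hzx.prodMk_nhds hfz).comp hτmono.tendsto_atTop
    have hφw : φ w = 0 := hcone hwcone
    have hw2 : w.2 = L w.1 := by
      refine hker_iff w.1 w.2 ?_
      rwa [show (w.1, w.2) = w from rfl]
    -- componentwise descriptions of wseq
    have hw1eq : ∀ k, (wseq k).1 = (lam k)⁻¹ • (z k - x) := fun k => rfl
    have hw2eq : ∀ k, (wseq k).2 = (lam k)⁻¹ * (f (z k) - f x) := fun k => rfl
    have hineq : ∀ k, ε * ‖(wseq k).1‖ ≤ |(wseq k).2 - L ((wseq k).1)| := by
      intro k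
      have hz := hzerr k
      have hnz : (0:ℝ) < ‖z k - x‖ := norm_pos_iff.2 (sub_ne_zero.2 (hzne k))
      rw [abs_mul, abs_of_pos (inv_pos.2 hnz)] at hz
      have hz' : ε * ‖z k - x‖ ≤ |f (z k) - f x - L (z k - x)| := by
        have := (le_inv_mul_iff₀ hnz).1 hz
        linarith
      rw [hw1eq, hw2eq, map_smul, smul_eq_mul, norm_smul, Real.norm_eq_abs,
        abs_of_pos (inv_pos.2 (hlampos k)), ← mul_sub, abs_mul,
        abs_of_pos (inv_pos.2 (hlampos k))]
      calc ε * ((lam k)⁻¹ * ‖z k - x‖) = (lam k)⁻¹ * (ε * ‖z k - x‖) := by ring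
        _ ≤ (lam k)⁻¹ * |f (z k) - f x - L (z k - x)| := by
            exact mul_le_mul_of_nonneg_left hz' (le_of_lt (inv_pos.2 (hlampos k)))
    -- pass to the limit
    have hc1 : Tendsto (fun k => ε * ‖(wseq (τ k)).1‖) atTop (𝓝 (ε * ‖w.1‖)) := by
      have : Continuous fun p : EuclideanSpace ℝ (Fin n) × ℝ => ε * ‖p.1‖ :=
        continuous_const.mul (continuous_norm.comp continuous_fst)
      exact (this.tendsto w).comp hwlim
    have hc2 : Tendsto (fun k => |(wseq (τ k)).2 - L ((wseq (τ k)).1)|)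
        atTop (𝓝 |w.2 - L w.1|) := by
      have : Continuous fun p : EuclideanSpace ℝ (Fin n) × ℝ => |p.2 - L p.1| :=
        (continuous_snd.sub (hLc.comp continuous_fst)).abs
      exact (this.tendsto w).comp hwlim
    have hlim : ε * ‖w.1‖ ≤ |w.2 - L w.1| :=
      le_of_tendsto_of_tendsto' hc1 hc2 (fun k => hineq (τ k))
    rw [hw2, sub_self, abs_zero] at hlim
    have hw1z : w.1 = 0 := by
      have h0 : ‖w.1‖ ≤ 0 :=
        le_of_not_gt fun hpos => absurd hlim (not_le.2 (mul_pos hεpos hpos))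
      exact norm_eq_zero.1 (le_antisymm h0 (norm_nonneg _))
    have hwzero : w = 0 := by
      have hw2z : w.2 = 0 := by rw [hw2, hw1z, map_zero]
      exact Prod.ext hw1z hw2z
    have hhalf : (1:ℝ)/2 ≤ ‖w‖ := by
      have hn : Tendsto (fun k => ‖wseq (τ k)‖) atTop (𝓝 ‖w‖) :=
        (continuous_norm.tendsto w).comp hwlim
      exact le_of_tendsto_of_tendsto' tendsto_const_nhds hn (fun k => hwhalf (τ k))
    rw [hwzero, norm_zero] at hhalf
    linarith
end

section
/- Let A ⊆ ℝᵐ, x̂ an interior point of A, f : A → ℝᵏ. Then f is differentiable at x̂ if and only if (1) f is continuous at x̂, (2) for every v ∈ ℝᵐ the directional derivative ∂f/∂v(x̂) := lim_{t→0⁺} (f(x̂+tv)-f(x̂))/t exists and is linear in v, and (3) the upper tangent cone of graph(f) at (x̂, f(x̂)) is a linear subspace of dimension m. -/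
/-!
If `f` has derivative `D` at `x`, its directional derivatives are `D v`, and a tangent vector
`w` of the graph, being a limit of rescaled secants `(y - x, f y - f x)`, satisfies
`w.2 = D w.1` because the linearization error is `o(‖y - x‖)`; so the tangent cone is the
graph of `D`. Conversely, the directional derivatives put the graph of the linear map `D`
into the tangent cone, and equal dimensions force the tangent subspace to be that graph. If
the linearization error along secants stayed `≥ ε ‖y - x‖`, the normalized secants would
accumulate, by compactness of the unit sphere, at a unit tangent vector off the graph of `D`.
-/

open Filter Metric Topology

theorem LinearMap.finrank_graph {R M N : Type*} [Ring R] [AddCommGroup M] [AddCommGroup N]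
    [Module R M] [Module R N] (g : M →ₗ[R] N) :
    Module.finrank R g.graph = Module.finrank R M := by
  rw [LinearMap.graph_eq_range_prod]
  exact LinearMap.finrank_range_of_inj fun a b h => congrArg Prod.fst h

section UpperTangentCone

variable {E : Type*} [NormedAddCommGroup E] [NormedSpace ℝ E]

theorem mem_upperTangentCone_of_frequently {ι : Type*} {l : Filter ι} [l.IsCountablyGenerated]
    {S : Set E} {p w : E} {c : ι → ℝ} {u : ι → E} (hS : ∃ᶠ i in l, 0 < c i ∧ u i ∈ S)
    (hc : Tendsto c l (𝓝 0)) (hu : Tendsto u l (𝓝 p))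
    (hw : Tendsto (fun i => (c i)⁻¹ • (u i - p)) l (𝓝 w)) :
    w ∈ upperTangentCone S p := by
  obtain ⟨s, hs, hsS⟩ := exists_seq_forall_of_frequently hS
  exact ⟨c ∘ s, u ∘ s, fun n => (hsS n).1, hc.comp hs, fun n => (hsS n).2, hu.comp hs,
    hw.comp hs⟩

theorem mem_upperTangentCone_of_mapClusterPt {S : Set E} {p w : E}
    (hw : MapClusterPt w (𝓝[S \ {p}] p) (fun q => ‖q - p‖⁻¹ • (q - p))) :
    w ∈ upperTangentCone S p := by
  set L := 𝓝[S \ {p}] p ⊓ comap (fun q => ‖q - p‖⁻¹ • (q - p)) (𝓝 w)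
  have : L.NeBot := neBot_inf_comap_iff_map.2 (by rwa [inf_comm])
  have hL : L ≤ 𝓝 p := inf_le_left.trans nhdsWithin_le_nhds
  refine mem_upperTangentCone_of_frequently (l := L) (u := id) ?_
    ((tendsto_norm_sub_self p).mono_left hL) hL (tendsto_comap.mono_left inf_le_right)
  have hSL : ∀ᶠ q in L, q ∈ S \ {p} := (inf_le_left : L ≤ _) self_mem_nhdsWithin
  refine hSL.frequently.mono ?_
  rintro q ⟨hqS, hqp⟩
  exact ⟨norm_pos_iff.2 (sub_ne_zero.2 hqp), hqS⟩

theorem eventually_sub_notMem_of_inter_upperTangentCone_subset [ProperSpace E] {S C : Set E}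
    {p : E} (hC : IsClosed C) (hsmul : ∀ t : ℝ, 0 < t → ∀ w ∈ C, t • w ∈ C)
    (hCS : C ∩ upperTangentCone S p ⊆ {0}) :
    ∀ᶠ q in 𝓝[S \ {p}] p, q - p ∉ C := by
  by_contra h
  have hfreq : ∃ᶠ q in 𝓝[S \ {p}] p, ‖q - p‖⁻¹ • (q - p) ∈ sphere 0 1 ∩ C := by
    refine (not_eventually.1 h).mp (eventually_mem_nhdsWithin.mono fun q hq hqC => ?_)
    have hqp : q - p ≠ 0 := sub_ne_zero.2 hq.2
    exact ⟨mem_sphere_zero_iff_norm.2 (norm_smul_inv_norm hqp),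
      hsmul _ (inv_pos.2 (norm_pos_iff.2 hqp)) _ (not_not.1 hqC)⟩
  obtain ⟨w, ⟨hw1, hwC⟩, hw⟩ :=
    ((isCompact_sphere 0 1).inter_right hC).exists_mapClusterPt_of_frequently hfreq
  have hw0 : w = 0 := hCS ⟨hwC, mem_upperTangentCone_of_mapClusterPt hw⟩
  simp [hw0] at hw1

end UpperTangentCone

section GraphOn

variable {E F : Type*} [NormedAddCommGroup E] [NormedSpace ℝ E] [NormedAddCommGroup F]
  [NormedSpace ℝ F] {A : Set E} {f : E → F} {x : E}

theorem mem_upperTangentCone_graphOn_of_tendsto_slope {v : E} {y : F} (hA : A ∈ 𝓝 x)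
    (hf : ContinuousWithinAt f A x)
    (hv : Tendsto (fun t : ℝ => t⁻¹ • (f (x + t • v) - f x)) (𝓝[>] 0) (𝓝 y)) :
    (v, y) ∈ upperTangentCone (A.graphOn f) (x, f x) := by
  have hline : Tendsto (fun t : ℝ => x + t • v) (𝓝[>] 0) (𝓝 x) :=
    (Continuous.tendsto' (by fun_prop) 0 x (by simp)).mono_left nhdsWithin_le_nhds
  have hmem : ∀ᶠ t in 𝓝[>] (0 : ℝ), 0 < t ∧ x + t • v ∈ A :=
    eventually_mem_nhdsWithin.and (hline.eventually hA)
  refine mem_upperTangentCone_of_frequently (c := id)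
    (u := fun t => (x + t • v, f (x + t • v)))
    (hmem.mono fun t ht => ⟨ht.1, by simpa using ht.2⟩).frequently
    (tendsto_id.mono_left nhdsWithin_le_nhds)
    (hline.prodMk_nhds (hf.tendsto.comp
      (tendsto_nhdsWithin_iff.2 ⟨hline, hmem.mono fun _ ht => ht.2⟩)))
    ((tendsto_const_nhds.prodMk_nhds hv).congr' ?_)
  filter_upwards [self_mem_nhdsWithin] with t (ht : 0 < t)
  simp [smul_smul, ht.ne']

theorem HasFDerivWithinAt.snd_eq_of_mem_upperTangentCone {D : E →L[ℝ] F}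
    (hf : HasFDerivWithinAt f D A x) {w : E × F}
    (hw : w ∈ upperTangentCone (A.graphOn f) (x, f x)) : w.2 = D w.1 := by
  obtain ⟨c, u, -, -, huS, hu, hcw⟩ := hw
  set a : ℕ → E := fun n => (u n).1
  have hua : ∀ n, (u n).2 = f (a n) := fun n => ((Set.mem_graphOn.1 (huS n)).2).symm
  have ha : Tendsto a atTop (𝓝[A] x) :=
    tendsto_nhdsWithin_iff.2 ⟨(continuous_fst.tendsto _).comp hu,
      Eventually.of_forall fun n => (Set.mem_graphOn.1 (huS n)).1⟩
  have hw1 : Tendsto (fun n => (c n)⁻¹ • (a n - x)) atTop (𝓝 w.1) :=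
    (continuous_fst.tendsto _).comp hcw
  have hw2 : Tendsto (fun n => (c n)⁻¹ • (f (a n) - f x)) atTop (𝓝 w.2) := by
    refine ((continuous_snd.tendsto _).comp hcw).congr fun n => ?_
    simp [a, hua]
  have hrem : Tendsto (fun n => ‖a n - x‖⁻¹ * ‖f (a n) - f x - D (a n - x)‖) atTop (𝓝 0) :=
    (hasFDerivWithinAt_iff_tendsto.1 hf).comp ha
  have hlim0 : Tendsto (fun n => (c n)⁻¹ • (f (a n) - f x - D (a n - x))) atTop (𝓝 0) := by
    refine tendsto_zero_iff_norm_tendsto_zero.2 ?_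
    have := hw1.norm.mul hrem
    rw [mul_zero] at this
    refine this.congr fun n => ?_
    rw [norm_smul, norm_smul, mul_assoc]
    by_cases han : a n = x
    · simp [han]
    · rw [← mul_assoc ‖a n - x‖, mul_inv_cancel₀ (norm_ne_zero_iff.2 (sub_ne_zero.2 han)),
        one_mul]
  have hlim : Tendsto (fun n => (c n)⁻¹ • (f (a n) - f x - D (a n - x))) atTop
      (𝓝 (w.2 - D w.1)) := by
    refine (hw2.sub ((D.continuous.tendsto _).comp hw1)).congr fun n => ?_
    simp only [Function.comp_apply, ← smul_sub, map_smul]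
  exact sub_eq_zero.1 (tendsto_nhds_unique hlim hlim0)

theorem hasFDerivWithinAt_of_upperTangentCone_graphOn_subset [FiniteDimensional ℝ E]
    [FiniteDimensional ℝ F] {D : E →L[ℝ] F} (hf : ContinuousWithinAt f A x)
    (hD : ∀ w ∈ upperTangentCone (A.graphOn f) (x, f x), w.2 = D w.1) :
    HasFDerivWithinAt f D A x := by
  rw [hasFDerivWithinAt_iff_isLittleO, Asymptotics.isLittleO_iff]
  intro ε hε
  set C : Set (E × F) := {w | ε * ‖w.1‖ ≤ ‖w.2 - D w.1‖}
  have hC : IsClosed C := isClosed_le (by fun_prop) (by fun_prop)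
  have hsmul : ∀ t : ℝ, 0 < t → ∀ w ∈ C, t • w ∈ C := by
    intro t ht w hw
    simp only [C, Set.mem_ofPred_eq, Prod.smul_fst, Prod.smul_snd, map_smul, ← smul_sub,
      norm_smul, Real.norm_of_nonneg ht.le] at hw ⊢
    nlinarith
  have hCcone : C ∩ upperTangentCone (A.graphOn f) (x, f x) ⊆ {0} := by
    rintro w ⟨hwC, hwcone⟩
    have hw1 : w.1 = 0 := by
      have hwC' : ε * ‖w.1‖ ≤ 0 := by simpa [C, hD w hwcone] using hwC
      exact norm_le_zero_iff.1 (by nlinarith [norm_nonneg w.1])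
    exact Prod.ext hw1 (by rw [hD w hwcone, hw1, map_zero]; rfl)
  have hgraph : Tendsto (fun y => (y, f y)) (𝓝[A \ {x}] x)
      (𝓝[A.graphOn f \ {(x, f x)}] (x, f x)) := by
    refine tendsto_nhdsWithin_iff.2 ⟨?_, eventually_mem_nhdsWithin.mono fun y hy => ?_⟩
    · exact (tendsto_id.mono_left nhdsWithin_le_nhds).prodMk_nhds
        (hf.tendsto.mono_left (nhdsWithin_mono _ Set.sdiff_subset))
    · exact ⟨Set.mem_image_of_mem _ hy.1, fun h => hy.2 (congrArg Prod.fst h)⟩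
  have hev := hgraph.eventually
    (eventually_sub_notMem_of_inter_upperTangentCone_subset hC hsmul hCcone)
  rw [eventually_nhdsWithin_iff] at hev ⊢
  filter_upwards [hev] with y hy hyA
  by_cases hyx : y = x
  · simp [hyx]
  · have hyC := hy ⟨hyA, hyx⟩
    simp only [C, Set.mem_ofPred_eq, Prod.fst_sub, Prod.snd_sub, not_le] at hyC
    exact hyC.le

theorem LinearMap.graph_subset_upperTangentCone_graphOn (hA : A ∈ 𝓝 x)
    (hf : ContinuousWithinAt f A x) {D : E →ₗ[ℝ] F}
    (hD : ∀ v, Tendsto (fun t : ℝ => t⁻¹ • (f (x + t • v) - f x)) (𝓝[>] 0) (𝓝 (D v))) :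
    (D.graph : Set (E × F)) ⊆ upperTangentCone (A.graphOn f) (x, f x) := by
  rintro ⟨v, y⟩ hy
  obtain rfl : y = D v := (LinearMap.mem_graph_iff _ _).1 hy
  exact mem_upperTangentCone_graphOn_of_tendsto_slope hA hf (hD v)

theorem HasFDerivWithinAt.upperTangentCone_graphOn_eq {D : E →L[ℝ] F}
    (hf : HasFDerivWithinAt f D A x) (hA : A ∈ 𝓝 x) :
    upperTangentCone (A.graphOn f) (x, f x) = (D : E →ₗ[ℝ] F).graph :=
  Set.Subset.antisymm
    (fun _ hw => (LinearMap.mem_graph_iff _ _).2 (hf.snd_eq_of_mem_upperTangentCone hw))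
    (LinearMap.graph_subset_upperTangentCone_graphOn hA hf.continuousWithinAt
      fun v => ((hf.hasFDerivAt hA).hasLineDerivAt v).tendsto_slope_zero_right)

end GraphOn

/-- Differentiability at an interior point is equivalent to: continuity, linearity of the
directional derivatives, and the upper tangent cone of the graph being an `m`-dimensional
linear subspace. -/
theorem differentiability_at_interior_point {m k : ℕ}
    (A : Set (EuclideanSpace ℝ (Fin m)))
    (f : EuclideanSpace ℝ (Fin m) → EuclideanSpace ℝ (Fin k))
    (x : EuclideanSpace ℝ (Fin m)) (hx : x ∈ interior A) :
    DifferentiableWithinAt ℝ f A x ↔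
      (ContinuousWithinAt f A x ∧
       (∃ D : EuclideanSpace ℝ (Fin m) →ₗ[ℝ] EuclideanSpace ℝ (Fin k),
          ∀ v, Filter.Tendsto (fun t : ℝ => t⁻¹ • (f (x + t • v) - f x))
            (𝓝[>] (0:ℝ)) (𝓝 (D v))) ∧
       (∃ W : Submodule ℝ (EuclideanSpace ℝ (Fin m) × EuclideanSpace ℝ (Fin k)),
          (W : Set (EuclideanSpace ℝ (Fin m) × EuclideanSpace ℝ (Fin k)))
              = upperTangentCone
                  {p : EuclideanSpace ℝ (Fin m) × EuclideanSpace ℝ (Fin k) |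
                    p.1 ∈ A ∧ p.2 = f p.1} (x, f x) ∧
          Module.finrank ℝ W = m)) := by
  have hA : A ∈ 𝓝 x := mem_interior_iff_mem_nhds.1 hx
  have hgraph : {p : EuclideanSpace ℝ (Fin m) × EuclideanSpace ℝ (Fin k) |
      p.1 ∈ A ∧ p.2 = f p.1} = A.graphOn f := by
    ext
    simp [eq_comm]
  rw [hgraph]
  constructor
  · rintro ⟨D, hD⟩
    refine ⟨hD.continuousWithinAt,
      ⟨D, fun v => ((hD.hasFDerivAt hA).hasLineDerivAt v).tendsto_slope_zero_right⟩,
      (D : _ →ₗ[ℝ] _).graph, (hD.upperTangentCone_graphOn_eq hA).symm, ?_⟩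
    rw [LinearMap.finrank_graph, finrank_euclideanSpace_fin]
  · rintro ⟨hc, ⟨D, hD⟩, W, hW, hWm⟩
    have hDW : D.graph = W := by
      refine Submodule.eq_of_le_of_finrank_le (fun p hp => ?_) ?_
      · rw [← SetLike.mem_coe, hW]
        exact D.graph_subset_upperTangentCone_graphOn hA hc hD hp
      · rw [hWm, LinearMap.finrank_graph, finrank_euclideanSpace_fin]
    refine (hasFDerivWithinAt_of_upperTangentCone_graphOn_subset (D := D.toContinuousLinearMap)
      hc fun w hw => ?_).differentiableWithinAt
    rw [← hW, ← hDW] at hw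
    exact (LinearMap.mem_graph_iff _ _).1 hw
end
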